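/- arXiv:2410.03924 — 7 statements merged into one kernel-verified Lean document; each statement's English description precedes it below -/
import Mathlib

section
/- Let e ∈ ℝ^r and θ̃⁻ ∈ ℝ^p, let F be an r×r real symmetric matrix with F e = L θ̃⁻, and define the updated estimation error θ̃ := θ̃⁻ − P Lᵀ R⁻¹ e. Then the Lyapunov value of the updated error satisfies θ̃ᵀ P⁻¹ θ̃ = θ̃⁻ᵀ (P⁻)⁻¹ θ̃⁻ + eᵀ (F R⁻¹ F − F R⁻¹ − R⁻¹ F + R⁻¹ L P Lᵀ R⁻¹) e. -/
/-!
The information form `P⁻¹ = (P⁻)⁻¹ + Lᵀ R⁻¹ L` of the covariance update is the only matrix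
identity needed. Writing `θ̃ = θ̃⁻ − P u` with `u = Lᵀ R⁻¹ e`, the symmetric form `P⁻¹` expands as
`θ̃⁻ᵀ P⁻¹ θ̃⁻ − 2 θ̃⁻ᵀ u + uᵀ P u`, and every term involving `θ̃⁻` other than `θ̃⁻ᵀ (P⁻)⁻¹ θ̃⁻`
enters only through `L θ̃⁻ = F e`, which turns it into a quadratic form in `e`.
-/

open Matrix

namespace Matrix

variable {m n α : Type*} [Fintype m] [Fintype n] [CommRing α]

theorem dotProduct_transpose_mul_mul_mulVec (A : Matrix m n α) (B : Matrix m m α) (x y : n → α) :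
    x ⬝ᵥ ((Aᵀ * B * A) *ᵥ y) = (A *ᵥ x) ⬝ᵥ (B *ᵥ (A *ᵥ y)) := by
  rw [← mulVec_mulVec, ← mulVec_mulVec, dotProduct_transpose_mulVec, dotProduct_comm]

theorem dotProduct_transpose_mulVec_of_mulVec_eq {F : Matrix m m α} (hF : F.IsSymm)
    {L : Matrix m n α} {e : m → α} {x : n → α} (hFe : F *ᵥ e = L *ᵥ x) (y : m → α) :
    x ⬝ᵥ (Lᵀ *ᵥ y) = e ⬝ᵥ (F *ᵥ y) := by
  rw [dotProduct_transpose_mulVec, ← hFe, ← dotProduct_transpose_mulVec, hF.eq]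

theorem PosDef.mul_mul_transpose_add {A : Matrix n n ℝ} {B : Matrix m m ℝ} (hA : A.PosDef)
    (hB : B.PosDef) (L : Matrix m n ℝ) : (L * A * Lᵀ + B).PosDef := by
  refine PosDef.posSemidef_add ?_ hB
  simpa only [conjTranspose_eq_transpose_of_trivial] using
    hA.posSemidef.mul_mul_conjTranspose_same L

variable [DecidableEq m] [DecidableEq n]

theorem kalman_update_mul_information_eq_one {Pminus : Matrix n n α} {R : Matrix m m α}
    (L : Matrix m n α) (hPminus : IsUnit Pminus.det) (hR : IsUnit R.det)
    (hS : IsUnit (L * Pminus * Lᵀ + R).det) :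
    (1 - Pminus * Lᵀ * (L * Pminus * Lᵀ + R)⁻¹ * L) * Pminus * (Pminus⁻¹ + Lᵀ * R⁻¹ * L) = 1 := by
  set S := L * Pminus * Lᵀ + R with hS_def
  -- substitute `L P⁻ Lᵀ = S - R` in the only term of the expansion that is quartic in `L`
  have hLPL : Pminus * Lᵀ * S⁻¹ * (L * Pminus * Lᵀ) * R⁻¹ * L =
      Pminus * Lᵀ * R⁻¹ * L - Pminus * Lᵀ * S⁻¹ * L := by
    rw [show L * Pminus * Lᵀ = S - R by rw [hS_def]; abel, Matrix.mul_sub, Matrix.sub_mul,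
      Matrix.sub_mul, Matrix.nonsing_inv_mul_cancel_right _ _ hS,
      Matrix.mul_nonsing_inv_cancel_right _ _ hR]
  calc (1 - Pminus * Lᵀ * S⁻¹ * L) * Pminus * (Pminus⁻¹ + Lᵀ * R⁻¹ * L)
      = 1 - Pminus * Lᵀ * S⁻¹ * L + Pminus * Lᵀ * R⁻¹ * L
          - Pminus * Lᵀ * S⁻¹ * (L * Pminus * Lᵀ) * R⁻¹ * L := by
        simp only [Matrix.sub_mul, Matrix.mul_add, Matrix.one_mul,
          Matrix.mul_nonsing_inv_cancel_right _ _ hPminus, Matrix.mul_nonsing_inv _ hPminus]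
        simp only [Matrix.mul_assoc]
        abel
    _ = 1 := by rw [hLPL]; abel

theorem sub_mulVec_dotProduct_mulVec_sub {M P : Matrix n n α} (hM : M.IsSymm) (hMP : M * P = 1)
    (x u : n → α) :
    (x - P *ᵥ u) ⬝ᵥ (M *ᵥ (x - P *ᵥ u)) = x ⬝ᵥ (M *ᵥ x) - 2 * (x ⬝ᵥ u) + u ⬝ᵥ (P *ᵥ u) := by
  have hMPu : M *ᵥ (P *ᵥ u) = u := by rw [mulVec_mulVec, hMP, one_mulVec]
  have hcross : (P *ᵥ u) ⬝ᵥ (M *ᵥ x) = x ⬝ᵥ u := by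
    rw [← dotProduct_transpose_mulVec, hM.eq, hMPu]
  rw [mulVec_sub, hMPu, sub_dotProduct, dotProduct_sub, dotProduct_sub, hcross,
    dotProduct_comm (P *ᵥ u) u]
  ring

theorem IsSymm.inv_add_transpose_mul_mul {A : Matrix n n α} {B : Matrix m m α} (hA : A.IsSymm)
    (hB : B.IsSymm) (L : Matrix m n α) : (A⁻¹ + Lᵀ * B⁻¹ * L).IsSymm :=
  hA.inv.add <| by
    simp only [IsSymm, transpose_mul, transpose_transpose, hB.inv.eq, Matrix.mul_assoc]

end Matrix

theorem ekf_lyapunov_value_expansion_general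
    (p r : ℕ)
    (Pminus : Matrix (Fin p) (Fin p) ℝ) (hPminus : Pminus.PosDef)
    (R : Matrix (Fin r) (Fin r) ℝ) (hR : R.PosDef)
    (L : Matrix (Fin r) (Fin p) ℝ)
    (S : Matrix (Fin r) (Fin r) ℝ) (hS : S = L * Pminus * Lᵀ + R)
    (K : Matrix (Fin p) (Fin r) ℝ) (hK : K = Pminus * Lᵀ * S⁻¹)
    (P : Matrix (Fin p) (Fin p) ℝ) (hP : P = (1 - K * L) * Pminus)
    (e : Fin r → ℝ) (θminus : Fin p → ℝ)
    (F : Matrix (Fin r) (Fin r) ℝ) (hF : F.IsSymm)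
    (hFe : F *ᵥ e = L *ᵥ θminus)
    (θ : Fin p → ℝ) (hθ : θ = θminus - (P * Lᵀ * R⁻¹) *ᵥ e) :
    θ ⬝ᵥ (P⁻¹ *ᵥ θ) =
      θminus ⬝ᵥ (Pminus⁻¹ *ᵥ θminus) +
        e ⬝ᵥ ((F * R⁻¹ * F - F * R⁻¹ - R⁻¹ * F + R⁻¹ * (L * P * Lᵀ) * R⁻¹) *ᵥ e) := by
  set M := Pminus⁻¹ + Lᵀ * R⁻¹ * L
  have hPM : P * M = 1 := by
    rw [hP, hK, hS]
    exact kalman_update_mul_information_eq_one L hPminus.det_pos.ne'.isUnit hR.det_pos.ne'.isUnit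
      (hPminus.mul_mul_transpose_add hR L).det_pos.ne'.isUnit
  have hR_symm : R.IsSymm := isHermitian_iff_isSymm.mp hR.isHermitian
  have hM : M.IsSymm :=
    (isHermitian_iff_isSymm.mp hPminus.isHermitian).inv_add_transpose_mul_mul hR_symm L
  set u := Lᵀ *ᵥ (R⁻¹ *ᵥ e)
  have hquad : θminus ⬝ᵥ (M *ᵥ θminus) =
      θminus ⬝ᵥ (Pminus⁻¹ *ᵥ θminus) + e ⬝ᵥ ((F * R⁻¹ * F) *ᵥ e) := by
    rw [add_mulVec, dotProduct_add, ← mulVec_mulVec, ← mulVec_mulVec,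
      dotProduct_transpose_mulVec_of_mulVec_eq hF hFe, ← hFe, mulVec_mulVec, mulVec_mulVec]
  have hcross_left : θminus ⬝ᵥ u = e ⬝ᵥ ((F * R⁻¹) *ᵥ e) := by
    rw [dotProduct_transpose_mulVec_of_mulVec_eq hF hFe, mulVec_mulVec]
  have hcross_right : θminus ⬝ᵥ u = e ⬝ᵥ ((R⁻¹ * F) *ᵥ e) := by
    rw [hcross_left, ← dotProduct_transpose_mulVec (F * R⁻¹), transpose_mul, hR_symm.inv.eq, hF.eq]
  have hgain : u ⬝ᵥ (P *ᵥ u) = e ⬝ᵥ ((R⁻¹ * (L * P * Lᵀ) * R⁻¹) *ᵥ e) :=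
    calc u ⬝ᵥ (P *ᵥ u) = (R⁻¹ *ᵥ e) ⬝ᵥ ((L * P * Lᵀ) *ᵥ (R⁻¹ *ᵥ e)) := by
          rw [← dotProduct_transpose_mul_mul_mulVec, transpose_transpose]
      _ = e ⬝ᵥ ((R⁻¹ * (L * P * Lᵀ) * R⁻¹) *ᵥ e) := by
          rw [← dotProduct_transpose_mul_mul_mulVec, hR_symm.inv.eq]
  have hθ_eq : θ = θminus - P *ᵥ u := by
    rw [hθ, mulVec_mulVec, mulVec_mulVec, Matrix.mul_assoc]
  rw [hθ_eq, inv_eq_right_inv hPM, sub_mulVec_dotProduct_mulVec_sub hM (mul_eq_one_comm.mp hPM),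
    hquad, hgain]
  simp only [add_mulVec, sub_mulVec, dotProduct_add, dotProduct_sub]
  linear_combination (-1 : ℝ) * hcross_left - hcross_right

/-- Lyapunov value of the updated EKF estimation error:
`θ̃ᵀ P⁻¹ θ̃ = θ̃⁻ᵀ (P⁻)⁻¹ θ̃⁻ + eᵀ (F R⁻¹ F − F R⁻¹ − R⁻¹ F + R⁻¹ L P Lᵀ R⁻¹) e`. -/
theorem ekf_lyapunov_value_expansion
    (p r : ℕ) (hp : 0 < p) (hr : 0 < r)
    (Pminus : Matrix (Fin p) (Fin p) ℝ) (hPminus : Pminus.PosDef)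
    (R : Matrix (Fin r) (Fin r) ℝ) (hR : R.PosDef)
    (L : Matrix (Fin r) (Fin p) ℝ)
    (S : Matrix (Fin r) (Fin r) ℝ) (hS : S = L * Pminus * Lᵀ + R)
    (K : Matrix (Fin p) (Fin r) ℝ) (hK : K = Pminus * Lᵀ * S⁻¹)
    (P : Matrix (Fin p) (Fin p) ℝ) (hP : P = (1 - K * L) * Pminus)
    (e : Fin r → ℝ) (θminus : Fin p → ℝ)
    (F : Matrix (Fin r) (Fin r) ℝ) (hF : F.IsSymm)
    (hFe : F *ᵥ e = L *ᵥ θminus)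
    (θ : Fin p → ℝ) (hθ : θ = θminus - (P * Lᵀ * R⁻¹) *ᵥ e) :
    θ ⬝ᵥ (P⁻¹ *ᵥ θ) =
      θminus ⬝ᵥ (Pminus⁻¹ *ᵥ θminus) +
        e ⬝ᵥ ((F * R⁻¹ * F - F * R⁻¹ - R⁻¹ * F + R⁻¹ * (L * P * Lᵀ) * R⁻¹) *ᵥ e) :=
  ekf_lyapunov_value_expansion_general p r Pminus hPminus R hR L S hS K hK P hP e θminus F hF hFe θ
    hθ
end

section
/- Suppose for every t ≥ 1 the Loewner inequality (F_t − I) R_t⁻¹ (F_t − I) ≼ (L_t P_{t−1} L_tᵀ + R_t)⁻¹ holds, and suppose there exists q > 0 such that G_tᵀ P_{t−1}⁻¹ G_t ≼ P_{t−1}⁻¹ − q·I for every t ≥ 1. Then the estimation errors converge to zero: θ̃_t → 0 as t → ∞; in fact the series ∑_{t≥0} ‖θ̃_t‖² is bounded by V_0/q, where V_0 := θ̃_0ᵀ P_0⁻¹ θ̃_0. -/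
/-!
`V t = θ̃_tᵀ P_t⁻¹ θ̃_t` is a Lyapunov function. Expanding it with the information-form update
`P_t⁻¹ = P_{t-1}⁻¹ + Lᵀ R⁻¹ L` and the covariance identity `R⁻¹ L P_t Lᵀ R⁻¹ = R⁻¹ - S⁻¹` completes a
square: `V t = xᵀ P_{t-1}⁻¹ x + (L x - e)ᵀ R⁻¹ (L x - e) - eᵀ S⁻¹ e` with `x = G θ̃_{t-1}`. Since
`L x - e = (F - 1) e`, the first Loewner condition makes the last two terms nonpositive, and the
second gives `xᵀ P_{t-1}⁻¹ x ≤ V (t-1) - q ‖θ̃_{t-1}‖²`. Telescoping bounds `q ∑ ‖θ̃_t‖²` by `V 0`.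
-/

open Matrix Filter Topology

namespace Matrix

theorem PosDef.isSymm {n : Type*} {M : Matrix n n ℝ} (hM : M.PosDef) : M.IsSymm :=
  isHermitian_iff_isSymm.mp hM.isHermitian

variable {m n : Type*} [Fintype m] [Fintype n]

theorem dotProduct_mulVec_transpose_mul_mul {R : Type*} [CommSemiring R]
    (A : Matrix m n R) (M : Matrix m m R) (v : n → R) :
    v ⬝ᵥ ((Aᵀ * M * A) *ᵥ v) = (A *ᵥ v) ⬝ᵥ (M *ᵥ (A *ᵥ v)) := by
  rw [← mulVec_mulVec, ← mulVec_mulVec, dotProduct_mulVec, vecMul_transpose]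

theorem IsSymm.sub_dotProduct_mulVec_sub {R : Type*} [CommRing R] {M : Matrix n n R}
    (hM : M.IsSymm) (x y : n → R) :
    (x - y) ⬝ᵥ (M *ᵥ (x - y)) = x ⬝ᵥ (M *ᵥ x) - 2 * (x ⬝ᵥ (M *ᵥ y)) + y ⬝ᵥ (M *ᵥ y) := by
  have hswap : y ⬝ᵥ (M *ᵥ x) = x ⬝ᵥ (M *ᵥ y) := by
    rw [dotProduct_mulVec, ← mulVec_transpose, hM.eq, dotProduct_comm]
  rw [mulVec_sub, dotProduct_sub, sub_dotProduct, sub_dotProduct, hswap]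
  ring

theorem PosSemidef.dotProduct_mulVec_le_of_sub {R : Type*} [CommRing R] [PartialOrder R]
    [IsOrderedRing R] [StarRing R] [TrivialStar R] {A B : Matrix n n R} (h : (A - B).PosSemidef)
    (v : n → R) :
    v ⬝ᵥ (B *ᵥ v) ≤ v ⬝ᵥ (A *ᵥ v) := by
  have := h.dotProduct_mulVec_nonneg v
  rwa [star_trivial, sub_mulVec, dotProduct_sub, sub_nonneg] at this

end Matrix

section KalmanFilter

variable {m n : Type*} [Fintype m] [Fintype n] [DecidableEq m] [DecidableEq n]

theorem kalman_covariance_update_sandwich {K : Type*} [CommRing K]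
    {P P' : Matrix n n K} {L : Matrix m n K} {R : Matrix m m K}
    (hS : IsUnit (L * P * Lᵀ + R).det) (hR : IsUnit R.det)
    (hP' : P' = (1 - P * Lᵀ * (L * P * Lᵀ + R)⁻¹ * L) * P) :
    R⁻¹ * (L * P' * Lᵀ) * R⁻¹ = R⁻¹ - (L * P * Lᵀ + R)⁻¹ := by
  set S := L * P * Lᵀ + R
  have hLPL : L * P * Lᵀ = S - R := (add_sub_cancel_right _ _).symm
  have hLP'L : L * P' * Lᵀ = R - R * S⁻¹ * R := by
    calc L * P' * Lᵀ = L * P * Lᵀ - L * P * Lᵀ * S⁻¹ * (L * P * Lᵀ) := by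
          rw [hP']; simp only [Matrix.sub_mul, Matrix.mul_sub, Matrix.one_mul, Matrix.mul_assoc]
      _ = R - R * S⁻¹ * R := by
          rw [hLPL]
          simp only [Matrix.sub_mul, Matrix.mul_sub, mul_nonsing_inv S hS, Matrix.one_mul]
          simp only [Matrix.mul_assoc, nonsing_inv_mul S hS, Matrix.mul_one]
          abel
  rw [hLP'L]
  simp only [Matrix.sub_mul, Matrix.mul_sub, ← Matrix.mul_assoc, nonsing_inv_mul R hR,
    Matrix.one_mul]
  simp only [Matrix.mul_assoc, mul_nonsing_inv R hR, Matrix.mul_one]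

theorem kalman_quadratic_form_update {P P' : Matrix n n ℝ} {L : Matrix m n ℝ} {R : Matrix m m ℝ}
    (hR : R.PosDef) (hP : P.PosSemidef) (hP' : P'.PosDef)
    (hrec : P' = (1 - P * Lᵀ * (L * P * Lᵀ + R)⁻¹ * L) * P)
    (hinv : P'⁻¹ = P⁻¹ + Lᵀ * R⁻¹ * L) (x : n → ℝ) (w : m → ℝ) :
    (x - (P' * Lᵀ * R⁻¹) *ᵥ w) ⬝ᵥ (P'⁻¹ *ᵥ (x - (P' * Lᵀ * R⁻¹) *ᵥ w)) =
      x ⬝ᵥ (P⁻¹ *ᵥ x) + (L *ᵥ x - w) ⬝ᵥ (R⁻¹ *ᵥ (L *ᵥ x - w))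
        - w ⬝ᵥ ((L * P * Lᵀ + R)⁻¹ *ᵥ w) := by
  set S := L * P * Lᵀ + R
  set K := P' * Lᵀ * R⁻¹
  have hS : S.PosDef :=
    PosDef.posSemidef_add (by simpa using hP.mul_mul_conjTranspose_same L) hR
  have hgain : P'⁻¹ * K = Lᵀ * R⁻¹ := by
    simp only [K, ← Matrix.mul_assoc,
      nonsing_inv_mul P' ((isUnit_iff_isUnit_det _).mp hP'.isUnit), Matrix.one_mul]
  have hKtK : Kᵀ * P'⁻¹ * K = R⁻¹ - S⁻¹ := by
    rw [Matrix.mul_assoc, hgain]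
    simp only [K, transpose_mul, transpose_transpose, hR.inv.isSymm.eq, hP'.isSymm.eq]
    convert kalman_covariance_update_sandwich ((isUnit_iff_isUnit_det _).mp hS.isUnit)
        ((isUnit_iff_isUnit_det _).mp hR.isUnit) hrec using 1
    simp only [Matrix.mul_assoc]
  have hxx : x ⬝ᵥ (P'⁻¹ *ᵥ x) = x ⬝ᵥ (P⁻¹ *ᵥ x) + (L *ᵥ x) ⬝ᵥ (R⁻¹ *ᵥ (L *ᵥ x)) := by
    rw [hinv, add_mulVec, dotProduct_add, dotProduct_mulVec_transpose_mul_mul]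
  have hxw : x ⬝ᵥ (P'⁻¹ *ᵥ (K *ᵥ w)) = (L *ᵥ x) ⬝ᵥ (R⁻¹ *ᵥ w) := by
    rw [mulVec_mulVec, hgain, ← mulVec_mulVec, dotProduct_mulVec, vecMul_transpose]
  have hww : (K *ᵥ w) ⬝ᵥ (P'⁻¹ *ᵥ (K *ᵥ w)) = w ⬝ᵥ (R⁻¹ *ᵥ w) - w ⬝ᵥ (S⁻¹ *ᵥ w) := by
    rw [← dotProduct_mulVec_transpose_mul_mul, hKtK, sub_mulVec, dotProduct_sub]
  rw [hP'.inv.isSymm.sub_dotProduct_mulVec_sub, hR.inv.isSymm.sub_dotProduct_mulVec_sub, hxx, hxw,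
    hww]
  ring

theorem ekf_lyapunov_decrease {P P' G : Matrix n n ℝ} {L : Matrix m n ℝ} {R F : Matrix m m ℝ}
    (hR : R.PosDef) (hF : F.IsSymm) (hP : P.PosSemidef) (hP' : P'.PosDef)
    (hrec : P' = (1 - P * Lᵀ * (L * P * Lᵀ + R)⁻¹ * L) * P)
    (hinv : P'⁻¹ = P⁻¹ + Lᵀ * R⁻¹ * L) {θ θ' : n → ℝ} {e : m → ℝ}
    (hθ' : θ' = G *ᵥ θ - (P' * Lᵀ * R⁻¹) *ᵥ e) (hFe : F *ᵥ e = L *ᵥ (G *ᵥ θ))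
    (hLoew1 : ((L * P * Lᵀ + R)⁻¹ - (F - 1) * R⁻¹ * (F - 1)).PosSemidef) {q : ℝ}
    (hLoew2 : ((P⁻¹ - q • (1 : Matrix n n ℝ)) - Gᵀ * P⁻¹ * G).PosSemidef) :
    θ' ⬝ᵥ (P'⁻¹ *ᵥ θ') + q * (θ ⬝ᵥ θ) ≤ θ ⬝ᵥ (P⁻¹ *ᵥ θ) := by
  have hinnov : L *ᵥ (G *ᵥ θ) - e = (F - 1) *ᵥ e := by rw [sub_mulVec, one_mulVec, hFe]
  have hinnov_le : (L *ᵥ (G *ᵥ θ) - e) ⬝ᵥ (R⁻¹ *ᵥ (L *ᵥ (G *ᵥ θ) - e)) ≤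
      e ⬝ᵥ ((L * P * Lᵀ + R)⁻¹ *ᵥ e) := by
    rw [hinnov, ← dotProduct_mulVec_transpose_mul_mul, (hF.sub isSymm_one).eq]
    exact hLoew1.dotProduct_mulVec_le_of_sub e
  have hpred_le : (G *ᵥ θ) ⬝ᵥ (P⁻¹ *ᵥ (G *ᵥ θ)) ≤ θ ⬝ᵥ (P⁻¹ *ᵥ θ) - q * (θ ⬝ᵥ θ) := by
    have := hLoew2.dotProduct_mulVec_le_of_sub θ
    rwa [dotProduct_mulVec_transpose_mul_mul, sub_mulVec, dotProduct_sub, smul_mulVec, one_mulVec,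
      dotProduct_smul, smul_eq_mul] at this
  rw [hθ', kalman_quadratic_form_update hR hP hP' hrec hinv]
  linarith

end KalmanFilter

theorem sum_range_le_div_of_decrease {V d : ℕ → ℝ} {q : ℝ} (hq : 0 < q) (hV : ∀ t, 0 ≤ V t)
    (hdecr : ∀ t, V (t + 1) + q * d t ≤ V t) (N : ℕ) :
    ∑ t ∈ Finset.range N, d t ≤ V 0 / q := by
  have htelescope : ∀ N, V N + q * ∑ t ∈ Finset.range N, d t ≤ V 0 := by
    intro N
    induction N with
    | zero => simp
    | succ N ih => rw [Finset.sum_range_succ, mul_add]; linarith [hdecr N]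
  rw [le_div_iff₀ hq, mul_comm]
  linarith [htelescope N, hV N]

theorem tendsto_zero_of_tendsto_dotProduct_self {ι α : Type*} [Fintype ι] {l : Filter α}
    {u : α → ι → ℝ} (h : Tendsto (fun a => u a ⬝ᵥ u a) l (𝓝 0)) : Tendsto u l (𝓝 0) := by
  refine tendsto_pi_nhds.mpr fun i => ?_
  have hcoord : ∀ a, ‖u a i‖ ≤ √(u a ⬝ᵥ u a) := fun a => Real.abs_le_sqrt <| by
    simpa only [sq, dotProduct] using Finset.single_le_sum (f := fun j => u a j * u a j)
      (fun j _ => mul_self_nonneg _) (Finset.mem_univ i)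
  exact squeeze_zero_norm hcoord (by simpa using h.sqrt)

theorem ekf_estimation_error_convergence_general
    (p r : ℕ)
    (R : ℕ → Matrix (Fin r) (Fin r) ℝ) (L : ℕ → Matrix (Fin r) (Fin p) ℝ)
    (F : ℕ → Matrix (Fin r) (Fin r) ℝ) (G : ℕ → Matrix (Fin p) (Fin p) ℝ)
    (hRpos : ∀ t : ℕ, (R (t + 1)).PosDef)
    (hFsymm : ∀ t : ℕ, (F (t + 1)).IsSymm)
    (P : ℕ → Matrix (Fin p) (Fin p) ℝ)
    (hPrec : ∀ t : ℕ,
      P (t + 1) =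
        (1 - (P t * (L (t + 1))ᵀ * (L (t + 1) * P t * (L (t + 1))ᵀ + R (t + 1))⁻¹) * L (t + 1)) *
          P t)
    (hPpos : ∀ t : ℕ, (P t).PosDef)
    (hPinv : ∀ t : ℕ,
      (P (t + 1))⁻¹ = (P t)⁻¹ + (L (t + 1))ᵀ * (R (t + 1))⁻¹ * L (t + 1))
    (θ : ℕ → Fin p → ℝ) (e : ℕ → Fin r → ℝ)
    (hθ : ∀ t : ℕ,
      θ (t + 1) = G (t + 1) *ᵥ θ t - (P (t + 1) * (L (t + 1))ᵀ * (R (t + 1))⁻¹) *ᵥ e (t + 1))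
    (hFe : ∀ t : ℕ, F (t + 1) *ᵥ e (t + 1) = L (t + 1) *ᵥ (G (t + 1) *ᵥ θ t))
    (hLoew1 : ∀ t : ℕ,
      ((L (t + 1) * P t * (L (t + 1))ᵀ + R (t + 1))⁻¹ -
        (F (t + 1) - 1) * (R (t + 1))⁻¹ * (F (t + 1) - 1)).PosSemidef)
    (q : ℝ) (hq : 0 < q)
    (hLoew2 : ∀ t : ℕ,
      (((P t)⁻¹ - q • (1 : Matrix (Fin p) (Fin p) ℝ)) -
        (G (t + 1))ᵀ * (P t)⁻¹ * G (t + 1)).PosSemidef) :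
    Filter.Tendsto θ Filter.atTop (nhds 0) ∧
      ∀ N : ℕ, ∑ t ∈ Finset.range N, θ t ⬝ᵥ θ t ≤ (θ 0 ⬝ᵥ ((P 0)⁻¹ *ᵥ θ 0)) / q := by
  set V : ℕ → ℝ := fun t => θ t ⬝ᵥ ((P t)⁻¹ *ᵥ θ t)
  have hV : ∀ t, 0 ≤ V t := fun t => by
    simpa using (hPpos t).inv.posSemidef.dotProduct_mulVec_nonneg (θ t)
  have hdecr : ∀ t, V (t + 1) + q * (θ t ⬝ᵥ θ t) ≤ V t := fun t =>
    ekf_lyapunov_decrease (hRpos t) (hFsymm t) (hPpos t).posSemidef (hPpos (t + 1)) (hPrec t)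
      (hPinv t) (hθ t) (hFe t) (hLoew1 t) (hLoew2 t)
  have hbound := sum_range_le_div_of_decrease hq hV hdecr
  have hsummable : Summable fun t => θ t ⬝ᵥ θ t :=
    summable_of_sum_range_le (fun t => by simpa using dotProduct_self_star_nonneg (θ t)) hbound
  exact ⟨tendsto_zero_of_tendsto_dotProduct_self hsummable.tendsto_atTop_zero, hbound⟩

/-- Convergence of the EKF parameter estimation errors: under the Loewner conditions with a
margin `q > 0`, `θ̃_t → 0` and the partial sums of `∑ ‖θ̃_t‖²` are bounded by `V_0 / q`.
(Quantities at time `t ≥ 1` are indexed with argument `t+1`, `t : ℕ`.) -/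
theorem ekf_estimation_error_convergence
    (p r : ℕ) (hp : 0 < p) (hr : 0 < r)
    (R : ℕ → Matrix (Fin r) (Fin r) ℝ) (L : ℕ → Matrix (Fin r) (Fin p) ℝ)
    (F : ℕ → Matrix (Fin r) (Fin r) ℝ) (G : ℕ → Matrix (Fin p) (Fin p) ℝ)
    (hRpos : ∀ t : ℕ, (R (t + 1)).PosDef)
    (hRsymm : ∀ t : ℕ, (R (t + 1)).IsSymm)
    (hFsymm : ∀ t : ℕ, (F (t + 1)).IsSymm)
    (P : ℕ → Matrix (Fin p) (Fin p) ℝ)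
    (hP0 : (P 0).PosDef)
    (hPrec : ∀ t : ℕ,
      P (t + 1) =
        (1 - (P t * (L (t + 1))ᵀ * (L (t + 1) * P t * (L (t + 1))ᵀ + R (t + 1))⁻¹) * L (t + 1)) *
          P t)
    (hPpos : ∀ t : ℕ, (P t).PosDef)
    (hPinv : ∀ t : ℕ,
      (P (t + 1))⁻¹ = (P t)⁻¹ + (L (t + 1))ᵀ * (R (t + 1))⁻¹ * L (t + 1))
    (θ : ℕ → Fin p → ℝ) (e : ℕ → Fin r → ℝ)
    (hθ : ∀ t : ℕ,
      θ (t + 1) = G (t + 1) *ᵥ θ t - (P (t + 1) * (L (t + 1))ᵀ * (R (t + 1))⁻¹) *ᵥ e (t + 1))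
    (hFe : ∀ t : ℕ, F (t + 1) *ᵥ e (t + 1) = L (t + 1) *ᵥ (G (t + 1) *ᵥ θ t))
    (hLoew1 : ∀ t : ℕ,
      ((L (t + 1) * P t * (L (t + 1))ᵀ + R (t + 1))⁻¹ -
        (F (t + 1) - 1) * (R (t + 1))⁻¹ * (F (t + 1) - 1)).PosSemidef)
    (q : ℝ) (hq : 0 < q)
    (hLoew2 : ∀ t : ℕ,
      (((P t)⁻¹ - q • (1 : Matrix (Fin p) (Fin p) ℝ)) -
        (G (t + 1))ᵀ * (P t)⁻¹ * G (t + 1)).PosSemidef) :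
    Filter.Tendsto θ Filter.atTop (nhds 0) ∧
      ∀ N : ℕ, ∑ t ∈ Finset.range N, θ t ⬝ᵥ θ t ≤ (θ 0 ⬝ᵥ ((P 0)⁻¹ *ᵥ θ 0)) / q :=
  ekf_estimation_error_convergence_general p r R L F G hRpos hFsymm P hPrec hPpos hPinv θ e hθ hFe
    hLoew1 q hq hLoew2
end

section
/- Suppose for every t ≥ 1 the Loewner inequality (F_t − I) R_t⁻¹ (F_t − I) ≼ (L_t P_{t−1} L_tᵀ + R_t)⁻¹ holds, and suppose there exists q > 0 such that G_tᵀ P_{t−1}⁻¹ G_t ≼ P_{t−1}⁻¹ − q·I for every t ≥ 1. Let θ* ∈ ℝ^p, define the parameter estimates θ̂_t := θ* − θ̃_t, and let ℒ : ℝ^p → ℝ be any continuous function with ℒ(θ*) = 0. Then the cumulative loss along the estimates converges to zero: ℒ(θ̂_t) → 0 as t → ∞. -/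
/-!
`V t := θ̃_tᵀ P_t⁻¹ θ̃_t` is a Lyapunov function. Substituting the update and the information
form of `P_t` gives the exact identity
`V t = (G_t θ̃_{t-1})ᵀ P_{t-1}⁻¹ (G_t θ̃_{t-1}) - e_tᵀ (S_t⁻¹ - (F_t - I) R_t⁻¹ (F_t - I)) e_t`,
so the two Loewner conditions give `V t + q ‖θ̃_{t-1}‖² ≤ V (t-1)`. Hence `∑ ‖θ̃_t‖² < ∞`,
`θ̃_t → 0`, `θ̂_t → θ*`, and continuity of `ℒ` concludes.
-/

open Matrix Filter Topology

section
variable {m n α : Type*} [Fintype m] [Fintype n] [CommRing α]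

lemma Matrix.mulVec_dotProduct (M : Matrix m n α) (u : n → α) (w : m → α) :
    (M *ᵥ u) ⬝ᵥ w = u ⬝ᵥ Mᵀ *ᵥ w := by
  rw [dotProduct_comm, dotProduct_transpose_mulVec]

lemma Matrix.IsSymm.sub_dotProduct_mulVec_sub_s9 {A : Matrix n n α} (hA : A.IsSymm) (x y : n → α) :
    (x - y) ⬝ᵥ A *ᵥ (x - y) = x ⬝ᵥ A *ᵥ x - 2 * (x ⬝ᵥ A *ᵥ y) + y ⬝ᵥ A *ᵥ y := by
  have hyx : y ⬝ᵥ A *ᵥ x = x ⬝ᵥ A *ᵥ y := by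
    rw [← dotProduct_transpose_mulVec, hA.eq]
  simp only [mulVec_sub, sub_dotProduct, dotProduct_sub, hyx]
  ring
end

section
variable {m n : Type*} [Fintype m] [Fintype n] [DecidableEq m] [DecidableEq n]
  {P P' : Matrix n n ℝ} {R : Matrix m m ℝ} {L : Matrix m n ℝ}

noncomputable def kalmanUpdate (P : Matrix n n ℝ) (L : Matrix m n ℝ) (R : Matrix m m ℝ) :
    Matrix n n ℝ :=
  (1 - P * Lᵀ * (L * P * Lᵀ + R)⁻¹ * L) * P

lemma inv_mul_mul_kalmanUpdate_mul_inv (hP : P.PosSemidef) (hR : R.PosDef) :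
    R⁻¹ * L * kalmanUpdate P L R * Lᵀ * R⁻¹ = R⁻¹ - (L * P * Lᵀ + R)⁻¹ := by
  set S := L * P * Lᵀ + R with hSdef
  have hS : S.PosDef := by
    refine PosDef.posSemidef_add ?_ hR
    simpa [conjTranspose_eq_transpose_of_trivial] using hP.mul_mul_conjTranspose_same L
  have hSd : IsUnit S.det := hS.det_pos.ne'.isUnit
  have hRd : IsUnit R.det := hR.det_pos.ne'.isUnit
  have hLPL : L * kalmanUpdate P L R * Lᵀ = R - R * S⁻¹ * R := by
    have hB : L * P * Lᵀ = S - R := by simp [S]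
    calc L * kalmanUpdate P L R * Lᵀ = L * P * Lᵀ - L * P * Lᵀ * S⁻¹ * (L * P * Lᵀ) := by
          rw [kalmanUpdate, ← hSdef]
          simp only [Matrix.sub_mul, Matrix.mul_sub, Matrix.one_mul, Matrix.mul_assoc]
      _ = R - R * S⁻¹ * R := by
          rw [hB]
          simp only [Matrix.sub_mul, Matrix.mul_sub, mul_nonsing_inv _ hSd,
            nonsing_inv_mul_cancel_right S _ hSd, Matrix.one_mul]
          abel
  calc R⁻¹ * L * kalmanUpdate P L R * Lᵀ * R⁻¹ = R⁻¹ * (L * kalmanUpdate P L R * Lᵀ) * R⁻¹ := by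
        simp only [Matrix.mul_assoc]
    _ = R⁻¹ - S⁻¹ := by
      simp only [hLPL, Matrix.mul_sub, Matrix.sub_mul, Matrix.mul_assoc, mul_nonsing_inv _ hRd,
        nonsing_inv_mul_cancel_left _ _ hRd, Matrix.mul_one]

lemma kalman_step_dotProduct_inv_mulVec {F : Matrix m m ℝ}
    (hP : P.PosSemidef) (hR : R.PosDef) (hP'pos : P'.PosDef) (hF : F.IsSymm)
    (hP' : P' = kalmanUpdate P L R)
    (hP'inv : P'⁻¹ = P⁻¹ + Lᵀ * R⁻¹ * L) {x : n → ℝ} {e : m → ℝ} (hFe : F *ᵥ e = L *ᵥ x) :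
    (x - (P' * Lᵀ * R⁻¹) *ᵥ e) ⬝ᵥ P'⁻¹ *ᵥ (x - (P' * Lᵀ * R⁻¹) *ᵥ e) =
      x ⬝ᵥ P⁻¹ *ᵥ x - e ⬝ᵥ ((L * P * Lᵀ + R)⁻¹ - (F - 1) * R⁻¹ * (F - 1)) *ᵥ e := by
  set K := P' * Lᵀ * R⁻¹
  have hRinv : R⁻¹.IsSymm := isHermitian_iff_isSymm.1 hR.inv.isHermitian
  have hP'sym : P'.IsSymm := isHermitian_iff_isSymm.1 hP'pos.isHermitian
  have hAK : P'⁻¹ * K = Lᵀ * R⁻¹ := by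
    simp only [K, Matrix.mul_assoc, nonsing_inv_mul_cancel_left _ _ hP'pos.det_pos.ne'.isUnit]
  have hKAK : Kᵀ * P'⁻¹ * K = R⁻¹ - (L * P * Lᵀ + R)⁻¹ := by
    rw [Matrix.mul_assoc, hAK, ← inv_mul_mul_kalmanUpdate_mul_inv hP hR, ← hP']
    simp only [K, transpose_mul, transpose_transpose, hRinv.eq, hP'sym.eq, Matrix.mul_assoc]
  have hquad : x ⬝ᵥ P'⁻¹ *ᵥ x = x ⬝ᵥ P⁻¹ *ᵥ x + (F *ᵥ e) ⬝ᵥ R⁻¹ *ᵥ (F *ᵥ e) := by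
    rw [hP'inv, add_mulVec, dotProduct_add, hFe, mulVec_dotProduct, mulVec_mulVec, mulVec_mulVec,
      Matrix.mul_assoc]
  have hcross : x ⬝ᵥ P'⁻¹ *ᵥ (K *ᵥ e) = (F *ᵥ e) ⬝ᵥ R⁻¹ *ᵥ e := by
    rw [mulVec_mulVec, hAK, hFe, mulVec_dotProduct, mulVec_mulVec]
  have hlast : (K *ᵥ e) ⬝ᵥ P'⁻¹ *ᵥ (K *ᵥ e) = e ⬝ᵥ R⁻¹ *ᵥ e - e ⬝ᵥ (L * P * Lᵀ + R)⁻¹ *ᵥ e := by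
    rw [mulVec_dotProduct, mulVec_mulVec, mulVec_mulVec, hKAK, sub_mulVec, dotProduct_sub]
  have hinnov : e ⬝ᵥ ((F - 1) * R⁻¹ * (F - 1)) *ᵥ e = (F *ᵥ e - e) ⬝ᵥ R⁻¹ *ᵥ (F *ᵥ e - e) := by
    have hFe1 : F *ᵥ e - e = (F - 1) *ᵥ e := by rw [sub_mulVec, one_mulVec]
    rw [hFe1, mulVec_dotProduct, (hF.sub isSymm_one).eq, mulVec_mulVec, mulVec_mulVec]
  rw [(isHermitian_iff_isSymm.1 hP'pos.inv.isHermitian).sub_dotProduct_mulVec_sub_s9, hquad, hcross,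
    hlast, sub_mulVec, dotProduct_sub, hinnov, hRinv.sub_dotProduct_mulVec_sub_s9]
  ring

lemma kalman_step_lyapunov_decrease {F : Matrix m m ℝ} {G : Matrix n n ℝ} {q : ℝ}
    (hP : P.PosSemidef) (hR : R.PosDef) (hP'pos : P'.PosDef) (hF : F.IsSymm)
    (hP' : P' = kalmanUpdate P L R)
    (hP'inv : P'⁻¹ = P⁻¹ + Lᵀ * R⁻¹ * L)
    (hFR : ((L * P * Lᵀ + R)⁻¹ - (F - 1) * R⁻¹ * (F - 1)).PosSemidef)
    (hGP : ((P⁻¹ - q • (1 : Matrix n n ℝ)) - Gᵀ * P⁻¹ * G).PosSemidef)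
    {θ θ' : n → ℝ} {e : m → ℝ} (hθ' : θ' = G *ᵥ θ - (P' * Lᵀ * R⁻¹) *ᵥ e)
    (hFe : F *ᵥ e = L *ᵥ (G *ᵥ θ)) :
    θ' ⬝ᵥ P'⁻¹ *ᵥ θ' + q * (θ ⬝ᵥ θ) ≤ θ ⬝ᵥ P⁻¹ *ᵥ θ := by
  have he := hFR.dotProduct_mulVec_nonneg e
  have hθ := hGP.dotProduct_mulVec_nonneg θ
  have hGθ : (G *ᵥ θ) ⬝ᵥ P⁻¹ *ᵥ (G *ᵥ θ) = θ ⬝ᵥ (Gᵀ * P⁻¹ * G) *ᵥ θ := by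
    rw [mulVec_dotProduct, mulVec_mulVec, mulVec_mulVec]
  simp only [star_trivial] at he hθ
  simp only [sub_mulVec, dotProduct_sub, smul_mulVec, one_mulVec, dotProduct_smul,
    smul_eq_mul] at hθ
  rw [hθ', kalman_step_dotProduct_inv_mulVec hP hR hP'pos hF hP' hP'inv hFe, hGθ]
  linarith
end

lemma tendsto_zero_of_succ_add_le {V c : ℕ → ℝ} (hV : ∀ t, 0 ≤ V t) (hc : ∀ t, 0 ≤ c t)
    (h : ∀ t, V (t + 1) + c t ≤ V t) : Tendsto c atTop (𝓝 0) := by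
  refine (summable_of_sum_range_le (c := V 0) hc fun n => ?_).tendsto_atTop_zero
  calc ∑ i ∈ Finset.range n, c i ≤ ∑ i ∈ Finset.range n, (V i - V (i + 1)) :=
        Finset.sum_le_sum fun i _ => by linarith [h i]
    _ = V 0 - V n := Finset.sum_range_sub' V n
    _ ≤ V 0 := by linarith [hV n]

lemma tendsto_nhds_zero_of_dotProduct_self {ι α : Type*} [Fintype ι] {f : α → ι → ℝ}
    {l : Filter α} (h : Tendsto (fun a => f a ⬝ᵥ f a) l (𝓝 0)) : Tendsto f l (𝓝 0) := by
  refine squeeze_zero_norm (fun a => ?_) (by simpa using (Real.continuous_sqrt.tendsto 0).comp h)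
  refine (pi_norm_le_iff_of_nonneg (Real.sqrt_nonneg _)).2 fun i => ?_
  rw [Real.norm_eq_abs]
  refine Real.abs_le_sqrt ?_
  rw [sq]
  exact Finset.single_le_sum (f := fun j => f a j * f a j) (fun j _ => mul_self_nonneg _)
    (Finset.mem_univ i)

/-- Quantities at time `t ≥ 1` are indexed with argument `t+1`, `t : ℕ`. -/
theorem ekf_cumulative_loss_convergence_general
    (p r : ℕ)
    (R : ℕ → Matrix (Fin r) (Fin r) ℝ) (L : ℕ → Matrix (Fin r) (Fin p) ℝ)
    (F : ℕ → Matrix (Fin r) (Fin r) ℝ) (G : ℕ → Matrix (Fin p) (Fin p) ℝ)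
    (hRpos : ∀ t : ℕ, (R (t + 1)).PosDef)
    (hFsymm : ∀ t : ℕ, (F (t + 1)).IsSymm)
    (P : ℕ → Matrix (Fin p) (Fin p) ℝ)
    (hPrec : ∀ t : ℕ,
      P (t + 1) =
        (1 - (P t * (L (t + 1))ᵀ * (L (t + 1) * P t * (L (t + 1))ᵀ + R (t + 1))⁻¹) * L (t + 1)) *
          P t)
    (hPpos : ∀ t : ℕ, (P t).PosDef)
    (hPinv : ∀ t : ℕ,
      (P (t + 1))⁻¹ = (P t)⁻¹ + (L (t + 1))ᵀ * (R (t + 1))⁻¹ * L (t + 1))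
    (θ : ℕ → Fin p → ℝ) (e : ℕ → Fin r → ℝ)
    (hθ : ∀ t : ℕ,
      θ (t + 1) = G (t + 1) *ᵥ θ t - (P (t + 1) * (L (t + 1))ᵀ * (R (t + 1))⁻¹) *ᵥ e (t + 1))
    (hFe : ∀ t : ℕ, F (t + 1) *ᵥ e (t + 1) = L (t + 1) *ᵥ (G (t + 1) *ᵥ θ t))
    (hLoew1 : ∀ t : ℕ,
      ((L (t + 1) * P t * (L (t + 1))ᵀ + R (t + 1))⁻¹ -
        (F (t + 1) - 1) * (R (t + 1))⁻¹ * (F (t + 1) - 1)).PosSemidef)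
    (q : ℝ) (hq : 0 < q)
    (hLoew2 : ∀ t : ℕ,
      (((P t)⁻¹ - q • (1 : Matrix (Fin p) (Fin p) ℝ)) -
        (G (t + 1))ᵀ * (P t)⁻¹ * G (t + 1)).PosSemidef)
    (θstar : Fin p → ℝ)
    (θhat : ℕ → Fin p → ℝ) (hθhat : ∀ t : ℕ, θhat t = θstar - θ t)
    (Loss : (Fin p → ℝ) → ℝ) (hLcont : Continuous Loss) (hL0 : Loss θstar = 0) :
    Filter.Tendsto (fun t : ℕ => Loss (θhat t)) Filter.atTop (nhds 0) := by
  have hstep : ∀ t, θ (t + 1) ⬝ᵥ (P (t + 1))⁻¹ *ᵥ θ (t + 1) + q * (θ t ⬝ᵥ θ t) ≤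
      θ t ⬝ᵥ (P t)⁻¹ *ᵥ θ t := fun t =>
    kalman_step_lyapunov_decrease (hPpos t).posSemidef (hRpos t) (hPpos (t + 1)) (hFsymm t)
      (hPrec t) (hPinv t) (hLoew1 t) (hLoew2 t) (hθ t) (hFe t)
  have hqθ : Tendsto (fun t => q * (θ t ⬝ᵥ θ t)) atTop (𝓝 0) :=
    tendsto_zero_of_succ_add_le
      (fun t => by simpa using (hPpos t).inv.posSemidef.dotProduct_mulVec_nonneg (θ t))
      (fun t => mul_nonneg hq.le (dotProduct_self_star_nonneg _)) hstep
  have hθ0 : Tendsto θ atTop (𝓝 0) :=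
    tendsto_nhds_zero_of_dotProduct_self (by simpa [hq.ne'] using hqθ.const_mul q⁻¹)
  have hθhat0 : Tendsto θhat atTop (𝓝 θstar) := by
    simpa [funext hθhat] using tendsto_const_nhds.sub hθ0
  rw [← hL0]
  exact (hLcont.tendsto θstar).comp hθhat0

/-- Convergence of the cumulative loss along the EKF parameter estimates: under the Loewner
conditions with a margin `q > 0`, for any continuous loss `ℒ` with `ℒ(θ*) = 0`, the loss
along the estimates `θ̂_t := θ* − θ̃_t` converges to zero.
(Quantities at time `t ≥ 1` are indexed with argument `t+1`, `t : ℕ`.) -/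
theorem ekf_cumulative_loss_convergence
    (p r : ℕ) (hp : 0 < p) (hr : 0 < r)
    (R : ℕ → Matrix (Fin r) (Fin r) ℝ) (L : ℕ → Matrix (Fin r) (Fin p) ℝ)
    (F : ℕ → Matrix (Fin r) (Fin r) ℝ) (G : ℕ → Matrix (Fin p) (Fin p) ℝ)
    (hRpos : ∀ t : ℕ, (R (t + 1)).PosDef)
    (hRsymm : ∀ t : ℕ, (R (t + 1)).IsSymm)
    (hFsymm : ∀ t : ℕ, (F (t + 1)).IsSymm)
    (P : ℕ → Matrix (Fin p) (Fin p) ℝ)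
    (hP0 : (P 0).PosDef)
    (hPrec : ∀ t : ℕ,
      P (t + 1) =
        (1 - (P t * (L (t + 1))ᵀ * (L (t + 1) * P t * (L (t + 1))ᵀ + R (t + 1))⁻¹) * L (t + 1)) *
          P t)
    (hPpos : ∀ t : ℕ, (P t).PosDef)
    (hPinv : ∀ t : ℕ,
      (P (t + 1))⁻¹ = (P t)⁻¹ + (L (t + 1))ᵀ * (R (t + 1))⁻¹ * L (t + 1))
    (θ : ℕ → Fin p → ℝ) (e : ℕ → Fin r → ℝ)
    (hθ : ∀ t : ℕ,
      θ (t + 1) = G (t + 1) *ᵥ θ t - (P (t + 1) * (L (t + 1))ᵀ * (R (t + 1))⁻¹) *ᵥ e (t + 1))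
    (hFe : ∀ t : ℕ, F (t + 1) *ᵥ e (t + 1) = L (t + 1) *ᵥ (G (t + 1) *ᵥ θ t))
    (hLoew1 : ∀ t : ℕ,
      ((L (t + 1) * P t * (L (t + 1))ᵀ + R (t + 1))⁻¹ -
        (F (t + 1) - 1) * (R (t + 1))⁻¹ * (F (t + 1) - 1)).PosSemidef)
    (q : ℝ) (hq : 0 < q)
    (hLoew2 : ∀ t : ℕ,
      (((P t)⁻¹ - q • (1 : Matrix (Fin p) (Fin p) ℝ)) -
        (G (t + 1))ᵀ * (P t)⁻¹ * G (t + 1)).PosSemidef)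
    (θstar : Fin p → ℝ)
    (θhat : ℕ → Fin p → ℝ) (hθhat : ∀ t : ℕ, θhat t = θstar - θ t)
    (Loss : (Fin p → ℝ) → ℝ) (hLcont : Continuous Loss) (hL0 : Loss θstar = 0) :
    Filter.Tendsto (fun t : ℕ => Loss (θhat t)) Filter.atTop (nhds 0) :=
  ekf_cumulative_loss_convergence_general p r R L F G hRpos hFsymm P hPrec hPpos hPinv θ e hθ hFe
    hLoew1 q hq hLoew2 θstar θhat hθhat Loss hLcont hL0
end

section
/- Fix t ∈ {0,…,T−1} and suppose matrices X_t ∈ ℝ^{n×p}, U_t ∈ ℝ^{m×p}, X_{t+1} ∈ ℝ^{n×p}, Λ_{t+1} ∈ ℝ^{n×p} satisfy the state equation X_{t+1} = F_t X_t + G_t U_t + E_t, the stationarity equation 0 = H^{ux}_t X_t + H^{uu}_t U_t + H^{uθ}_t + G_tᵀ Λ_{t+1}, and the costate ansatz Λ_{t+1} = V_{t+1} X_{t+1} + W_{t+1}. If H^{uu}_t and I + V_{t+1} B_t are invertible, then U_t = −(H^{uu}_t)⁻¹ (H^{ux}_t X_t + H^{uθ}_t + G_tᵀ (I + V_{t+1}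 B_t)⁻¹ (V_{t+1} A_t X_t + V_{t+1} M_t + W_{t+1})). -/
open Matrix

/-- PDP auxiliary control: given the state equation, stationarity equation and the costate
ansatz `Λ_{t+1} = V_{t+1} X_{t+1} + W_{t+1}`, the control gradient satisfies
`U_t = −(H^{uu}_t)⁻¹ (H^{ux}_t X_t + H^{uθ}_t + G_tᵀ (I + V_{t+1} B_t)⁻¹
(V_{t+1} A_t X_t + V_{t+1} M_t + W_{t+1}))`. -/
theorem pdp_control_update_formula
    (n m p T : ℕ) (hn : 0 < n) (hm : 0 < m) (hp : 0 < p) (hT : 1 ≤ T)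
    (F : ℕ → Matrix (Fin n) (Fin n) ℝ) (G : ℕ → Matrix (Fin n) (Fin m) ℝ)
    (E : ℕ → Matrix (Fin n) (Fin p) ℝ)
    (Hxx : ℕ → Matrix (Fin n) (Fin n) ℝ) (hHxx : ∀ t < T, (Hxx t).IsSymm)
    (Hxu : ℕ → Matrix (Fin n) (Fin m) ℝ)
    (Huu : ℕ → Matrix (Fin m) (Fin m) ℝ)
    (hHuuSymm : ∀ t < T, (Huu t).IsSymm) (hHuu : ∀ t < T, IsUnit (Huu t).det)
    (Hxθ : ℕ → Matrix (Fin n) (Fin p) ℝ) (Huθ : ℕ → Matrix (Fin m) (Fin p) ℝ)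
    (t : ℕ) (ht : t < T)
    (Vnext : Matrix (Fin n) (Fin n) ℝ) (Wnext : Matrix (Fin n) (Fin p) ℝ)
    (hVB : IsUnit (1 + Vnext * (G t * (Huu t)⁻¹ * (G t)ᵀ)).det)
    (X Xnext : Matrix (Fin n) (Fin p) ℝ) (U : Matrix (Fin m) (Fin p) ℝ)
    (Λnext : Matrix (Fin n) (Fin p) ℝ)
    (hstate : Xnext = F t * X + G t * U + E t)
    (hstat : 0 = (Hxu t)ᵀ * X + Huu t * U + Huθ t + (G t)ᵀ * Λnext)
    (hansatz : Λnext = Vnext * Xnext + Wnext) :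
    U = -(Huu t)⁻¹ *
        ((Hxu t)ᵀ * X + Huθ t +
          (G t)ᵀ * (1 + Vnext * (G t * (Huu t)⁻¹ * (G t)ᵀ))⁻¹ *
            (Vnext * (F t - G t * (Huu t)⁻¹ * (Hxu t)ᵀ) * X +
              Vnext * (E t - G t * (Huu t)⁻¹ * Huθ t) + Wnext)) := by
  have hK : IsUnit (Huu t).det := hHuu t ht
  have hKinv : (Huu t)⁻¹ * Huu t = 1 := Matrix.nonsing_inv_mul _ hK
  have hU : U = -((Huu t)⁻¹ * ((Hxu t)ᵀ * X + Huθ t + (G t)ᵀ * Λnext)) := by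
    have h : (Hxu t)ᵀ * X + Huu t * U + Huθ t + (G t)ᵀ * Λnext = 0 := hstat.symm
    have h1 : Huu t * U = -((Hxu t)ᵀ * X + Huθ t + (G t)ᵀ * Λnext) := by
      calc Huu t * U
          = ((Hxu t)ᵀ * X + Huu t * U + Huθ t + (G t)ᵀ * Λnext)
            - ((Hxu t)ᵀ * X + Huθ t + (G t)ᵀ * Λnext) := by abel
        _ = -((Hxu t)ᵀ * X + Huθ t + (G t)ᵀ * Λnext) := by rw [h]; abel
    calc U = (Huu t)⁻¹ * (Huu t * U) := by
            rw [← Matrix.mul_assoc, hKinv, Matrix.one_mul]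
      _ = _ := by rw [h1, Matrix.mul_neg]
  have hkey : (1 + Vnext * (G t * (Huu t)⁻¹ * (G t)ᵀ)) * Λnext
      = Vnext * (F t - G t * (Huu t)⁻¹ * (Hxu t)ᵀ) * X +
        Vnext * (E t - G t * (Huu t)⁻¹ * Huθ t) + Wnext := by
    have e : (1 + Vnext * (G t * (Huu t)⁻¹ * (G t)ᵀ)) * Λnext
        = Λnext + Vnext * (G t * (Huu t)⁻¹ * (G t)ᵀ) * Λnext := by
      rw [Matrix.add_mul, Matrix.one_mul]
    rw [e]
    nth_rewrite 1 [hansatz]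
    rw [hstate, hU]
    simp only [Matrix.mul_add, Matrix.add_mul, Matrix.sub_mul, Matrix.mul_sub,
      Matrix.neg_mul, Matrix.mul_neg, Matrix.one_mul, Matrix.mul_one,
      Matrix.mul_assoc, neg_add, neg_neg, sub_eq_add_neg]
    abel
  have hΛ : Λnext = (1 + Vnext * (G t * (Huu t)⁻¹ * (G t)ᵀ))⁻¹ *
      (Vnext * (F t - G t * (Huu t)⁻¹ * (Hxu t)ᵀ) * X +
        Vnext * (E t - G t * (Huu t)⁻¹ * Huθ t) + Wnext) := by
    rw [← hkey, ← Matrix.mul_assoc, Matrix.nonsing_inv_mul _ hVB, Matrix.one_mul]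
  rw [hU, hΛ]
  rw [Matrix.neg_mul, ← Matrix.mul_assoc]
end

section
/- Fix t ∈ {0,…,T−1} and suppose matrices X_t, X_{t+1} ∈ ℝ^{n×p}, U_t ∈ ℝ^{m×p}, Λ_t, Λ_{t+1} ∈ ℝ^{n×p} satisfy the state equation X_{t+1} = F_t X_t + G_t U_t + E_t, the costate equation Λ_t = H^{xx}_t X_t + H^{xu}_t U_t + H^{xθ}_t + F_tᵀ Λ_{t+1}, the stationarity equation 0 = H^{ux}_t X_t + H^{uu}_t U_t + H^{uθ}_t + G_tᵀ Λ_{t+1}, and the costate ansatz Λ_{t+1} = V_{t+1} X_{t+1} + W_{t+1}. If H^{uu}_t and I + V_{t+1} B_t are invertible, then Λ_t = V_t X_t + W_t, where V_t := C_t + A_tᵀ (I + V_{t+1} B_t)⁻¹ V_{t+1} A_t and W_t := A_tᵀ (I + V_{t+1} B_t)⁻¹ (W_{t+1} + V_{t+1} M_t) + N_t. -/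
open Matrix

set_option maxHeartbeats 1000000 in
/-- PDP backward recursion step: given the state equation, costate equation, stationarity
equation and the costate ansatz `Λ_{t+1} = V_{t+1} X_{t+1} + W_{t+1}`, the costate at time `t`
satisfies `Λ_t = V_t X_t + W_t` with
`V_t := C_t + A_tᵀ (I + V_{t+1} B_t)⁻¹ V_{t+1} A_t` and
`W_t := A_tᵀ (I + V_{t+1} B_t)⁻¹ (W_{t+1} + V_{t+1} M_t) + N_t`. -/
theorem pdp_costate_recursion_step
    (n m p T : ℕ) (hn : 0 < n) (hm : 0 < m) (hp : 0 < p) (hT : 1 ≤ T)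
    (F : ℕ → Matrix (Fin n) (Fin n) ℝ) (G : ℕ → Matrix (Fin n) (Fin m) ℝ)
    (E : ℕ → Matrix (Fin n) (Fin p) ℝ)
    (Hxx : ℕ → Matrix (Fin n) (Fin n) ℝ) (hHxx : ∀ t < T, (Hxx t).IsSymm)
    (Hxu : ℕ → Matrix (Fin n) (Fin m) ℝ)
    (Huu : ℕ → Matrix (Fin m) (Fin m) ℝ)
    (hHuuSymm : ∀ t < T, (Huu t).IsSymm) (hHuu : ∀ t < T, IsUnit (Huu t).det)
    (Hxθ : ℕ → Matrix (Fin n) (Fin p) ℝ) (Huθ : ℕ → Matrix (Fin m) (Fin p) ℝ)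
    (t : ℕ) (ht : t < T)
    (Vnext : Matrix (Fin n) (Fin n) ℝ) (Wnext : Matrix (Fin n) (Fin p) ℝ)
    (hVB : IsUnit (1 + Vnext * (G t * (Huu t)⁻¹ * (G t)ᵀ)).det)
    (X Xnext : Matrix (Fin n) (Fin p) ℝ) (U : Matrix (Fin m) (Fin p) ℝ)
    (Λ Λnext : Matrix (Fin n) (Fin p) ℝ)
    (hstate : Xnext = F t * X + G t * U + E t)
    (hcostate : Λ = Hxx t * X + Hxu t * U + Hxθ t + (F t)ᵀ * Λnext)
    (hstat : 0 = (Hxu t)ᵀ * X + Huu t * U + Huθ t + (G t)ᵀ * Λnext)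
    (hansatz : Λnext = Vnext * Xnext + Wnext) :
    Λ =
      (Hxx t - Hxu t * (Huu t)⁻¹ * (Hxu t)ᵀ +
          (F t - G t * (Huu t)⁻¹ * (Hxu t)ᵀ)ᵀ *
            (1 + Vnext * (G t * (Huu t)⁻¹ * (G t)ᵀ))⁻¹ * Vnext *
            (F t - G t * (Huu t)⁻¹ * (Hxu t)ᵀ)) * X +
        ((F t - G t * (Huu t)⁻¹ * (Hxu t)ᵀ)ᵀ *
            (1 + Vnext * (G t * (Huu t)⁻¹ * (G t)ᵀ))⁻¹ *
            (Wnext + Vnext * (E t - G t * (Huu t)⁻¹ * Huθ t)) +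
          (Hxθ t - Hxu t * (Huu t)⁻¹ * Huθ t)) := by
  have hHuuInv' : (Huu t)⁻¹ * (Huu t) = 1 := Matrix.nonsing_inv_mul _ (hHuu t ht)
  have hSymmInv : ((Huu t)⁻¹)ᵀ = (Huu t)⁻¹ := by
    rw [Matrix.transpose_nonsing_inv, (hHuuSymm t ht)]
  set S := 1 + Vnext * (G t * (Huu t)⁻¹ * (G t)ᵀ) with hS
  have hSinv : S⁻¹ * S = 1 := Matrix.nonsing_inv_mul _ hVB
  have hU : U = (Huu t)⁻¹ * (-((Hxu t)ᵀ * X + Huθ t + (G t)ᵀ * Λnext)) := by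
    have h1 : Huu t * U = -((Hxu t)ᵀ * X + Huθ t + (G t)ᵀ * Λnext) := by
      have h := hstat
      have h3 : (Hxu t)ᵀ * X + Huu t * U + Huθ t + (G t)ᵀ * Λnext
          - ((Hxu t)ᵀ * X + Huθ t + (G t)ᵀ * Λnext) = 0 - ((Hxu t)ᵀ * X + Huθ t + (G t)ᵀ * Λnext) := by
        rw [← h]
      calc Huu t * U = (Hxu t)ᵀ * X + Huu t * U + Huθ t + (G t)ᵀ * Λnext
          - ((Hxu t)ᵀ * X + Huθ t + (G t)ᵀ * Λnext) := by abel
      _ = -((Hxu t)ᵀ * X + Huθ t + (G t)ᵀ * Λnext) := by rw [h3]; abel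
    calc U = ((Huu t)⁻¹ * Huu t) * U := by rw [hHuuInv', Matrix.one_mul]
    _ = (Huu t)⁻¹ * (Huu t * U) := by rw [Matrix.mul_assoc]
    _ = _ := by rw [h1]
  have hGU : G t * U = -(G t * (Huu t)⁻¹ * (Hxu t)ᵀ * X + G t * (Huu t)⁻¹ * Huθ t
      + G t * (Huu t)⁻¹ * (G t)ᵀ * Λnext) := by
    rw [hU]
    simp only [Matrix.mul_add, Matrix.add_mul, Matrix.mul_sub, Matrix.sub_mul, Matrix.mul_neg,
      Matrix.neg_mul, Matrix.mul_assoc, Matrix.mul_one, Matrix.one_mul, neg_add]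
  have h2 : Λnext = Vnext * (F t * X + G t * U + E t) + Wnext := by rw [hansatz, hstate]
  have key : Λnext + Vnext * (G t * (Huu t)⁻¹ * (G t)ᵀ) * Λnext
      = Vnext * ((F t - G t * (Huu t)⁻¹ * (Hxu t)ᵀ) * X + (E t - G t * (Huu t)⁻¹ * Huθ t)) + Wnext := by
    nth_rewrite 1 [h2]
    rw [hGU]
    simp only [Matrix.mul_add, Matrix.add_mul, Matrix.mul_sub, Matrix.sub_mul, Matrix.mul_neg,
      Matrix.neg_mul, Matrix.mul_assoc, Matrix.mul_one, Matrix.one_mul, neg_add, sub_eq_add_neg]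
    abel
  have hSL : S * Λnext = Vnext * ((F t - G t * (Huu t)⁻¹ * (Hxu t)ᵀ) * X
      + (E t - G t * (Huu t)⁻¹ * Huθ t)) + Wnext := by
    calc S * Λnext = Λnext + Vnext * (G t * (Huu t)⁻¹ * (G t)ᵀ) * Λnext := by
          rw [hS]
          simp only [Matrix.add_mul, Matrix.one_mul, Matrix.mul_assoc]
    _ = _ := key
  have hLam : Λnext = S⁻¹ * (Vnext * ((F t - G t * (Huu t)⁻¹ * (Hxu t)ᵀ) * X
      + (E t - G t * (Huu t)⁻¹ * Huθ t)) + Wnext) := by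
    calc Λnext = (S⁻¹ * S) * Λnext := by rw [hSinv, Matrix.one_mul]
    _ = S⁻¹ * (S * Λnext) := by rw [Matrix.mul_assoc]
    _ = _ := by rw [hSL]
  rw [hcostate, hU, hLam]
  simp only [Matrix.transpose_sub, Matrix.transpose_mul, Matrix.transpose_transpose, hSymmInv]
  simp only [Matrix.mul_add, Matrix.add_mul, Matrix.mul_sub, Matrix.sub_mul, Matrix.mul_neg,
    Matrix.neg_mul, Matrix.mul_assoc, Matrix.mul_one, Matrix.one_mul, neg_add, neg_neg,
    sub_eq_add_neg]
  abel
end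

section
/- Suppose the sequences X_t ∈ ℝ^{n×p} (t = 0,…,T), U_t ∈ ℝ^{m×p} (t = 0,…,T−1), and Λ_t ∈ ℝ^{n×p} (t = 0,…,T) satisfy, for every t ∈ {0,…,T−1}, the state equation X_{t+1} = F_t X_t + G_t U_t + E_t, the costate equation Λ_t = H^{xx}_t X_t + H^{xu}_t U_t + H^{xθ}_t + F_tᵀ Λ_{t+1}, and the stationarity equation 0 = H^{ux}_t X_t + H^{uu}_t U_t + H^{uθ}_t + G_tᵀ Λ_{t+1}, together with the terminal condition Λ_T = H^{xx}_T X_T + H^{xθ}_T. Then for every t ∈ {0,…,T}, Λ_t = V_t X_t + W_t, and for every t ∈ {0,…,T−1}, U_t = −(H^{uu}_t)⁻¹ (H^{ux}_t X_t + H^{uθ}_t + G_tᵀ (I + V_{t+1} B_t)⁻¹ (V_{t+1} A_t X_t + V_{t+1} M_t + W_{t+1})). -/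
open Matrix

/-- PDP Lemma (backward pass): if the matrix sequences `X, U, Λ` satisfy the differentiated
Pontryagin system with terminal condition `Λ_T = H^{xx}_T X_T + H^{xθ}_T`, and `V, W` are
defined by the backward Riccati-type recursion, then `Λ_t = V_t X_t + W_t` for all
`t ∈ {0,…,T}` and `U_t = −(H^{uu}_t)⁻¹ (H^{ux}_t X_t + H^{uθ}_t + G_tᵀ (I + V_{t+1} B_t)⁻¹
(V_{t+1} A_t X_t + V_{t+1} M_t + W_{t+1}))` for all `t ∈ {0,…,T−1}`. -/
theorem pdp_backward_pass
    (n m p T : ℕ) (hn : 0 < n) (hm : 0 < m) (hp : 0 < p) (hT : 1 ≤ T)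
    (F : ℕ → Matrix (Fin n) (Fin n) ℝ) (G : ℕ → Matrix (Fin n) (Fin m) ℝ)
    (E : ℕ → Matrix (Fin n) (Fin p) ℝ)
    (Hxx : ℕ → Matrix (Fin n) (Fin n) ℝ) (hHxx : ∀ t ≤ T, (Hxx t).IsSymm)
    (Hxu : ℕ → Matrix (Fin n) (Fin m) ℝ)
    (Huu : ℕ → Matrix (Fin m) (Fin m) ℝ)
    (hHuuSymm : ∀ t < T, (Huu t).IsSymm) (hHuu : ∀ t < T, IsUnit (Huu t).det)
    (Hxθ : ℕ → Matrix (Fin n) (Fin p) ℝ) (Huθ : ℕ → Matrix (Fin m) (Fin p) ℝ)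
    (V : ℕ → Matrix (Fin n) (Fin n) ℝ) (W : ℕ → Matrix (Fin n) (Fin p) ℝ)
    (hVT : V T = Hxx T) (hWT : W T = Hxθ T)
    (hVB : ∀ t < T, IsUnit (1 + V (t + 1) * (G t * (Huu t)⁻¹ * (G t)ᵀ)).det)
    (hVrec : ∀ t < T,
      V t =
        Hxx t - Hxu t * (Huu t)⁻¹ * (Hxu t)ᵀ +
          (F t - G t * (Huu t)⁻¹ * (Hxu t)ᵀ)ᵀ *
            (1 + V (t + 1) * (G t * (Huu t)⁻¹ * (G t)ᵀ))⁻¹ * V (t + 1) *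
            (F t - G t * (Huu t)⁻¹ * (Hxu t)ᵀ))
    (hWrec : ∀ t < T,
      W t =
        (F t - G t * (Huu t)⁻¹ * (Hxu t)ᵀ)ᵀ *
            (1 + V (t + 1) * (G t * (Huu t)⁻¹ * (G t)ᵀ))⁻¹ *
            (W (t + 1) + V (t + 1) * (E t - G t * (Huu t)⁻¹ * Huθ t)) +
          (Hxθ t - Hxu t * (Huu t)⁻¹ * Huθ t))
    (X : ℕ → Matrix (Fin n) (Fin p) ℝ) (U : ℕ → Matrix (Fin m) (Fin p) ℝ)
    (Λ : ℕ → Matrix (Fin n) (Fin p) ℝ)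
    (hstate : ∀ t < T, X (t + 1) = F t * X t + G t * U t + E t)
    (hcostate : ∀ t < T, Λ t = Hxx t * X t + Hxu t * U t + Hxθ t + (F t)ᵀ * Λ (t + 1))
    (hstat : ∀ t < T, 0 = (Hxu t)ᵀ * X t + Huu t * U t + Huθ t + (G t)ᵀ * Λ (t + 1))
    (hterm : Λ T = Hxx T * X T + Hxθ T) :
    (∀ t ≤ T, Λ t = V t * X t + W t) ∧
      ∀ t < T,
        U t = -(Huu t)⁻¹ *
          ((Hxu t)ᵀ * X t + Huθ t +
            (G t)ᵀ * (1 + V (t + 1) * (G t * (Huu t)⁻¹ * (G t)ᵀ))⁻¹ *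
              (V (t + 1) * (F t - G t * (Huu t)⁻¹ * (Hxu t)ᵀ) * X t +
                V (t + 1) * (E t - G t * (Huu t)⁻¹ * Huθ t) + W (t + 1))) := by
  have step : ∀ t < T, Λ (t + 1) = V (t + 1) * X (t + 1) + W (t + 1) →
      (U t = -(Huu t)⁻¹ *
          ((Hxu t)ᵀ * X t + Huθ t +
            (G t)ᵀ * (1 + V (t + 1) * (G t * (Huu t)⁻¹ * (G t)ᵀ))⁻¹ *
              (V (t + 1) * (F t - G t * (Huu t)⁻¹ * (Hxu t)ᵀ) * X t +
                V (t + 1) * (E t - G t * (Huu t)⁻¹ * Huθ t) + W (t + 1))) ∧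
        Λ t = V t * X t + W t) := by
    intro t ht ih
    have hHuuInvT : ((Huu t)⁻¹)ᵀ = (Huu t)⁻¹ := by
      rw [Matrix.transpose_nonsing_inv, (hHuuSymm t ht).eq]
    -- solve stationarity for U
    have h2 : Huu t * U t + ((Hxu t)ᵀ * X t + Huθ t + (G t)ᵀ * Λ (t + 1)) = 0 := by
      calc Huu t * U t + ((Hxu t)ᵀ * X t + Huθ t + (G t)ᵀ * Λ (t + 1))
          = (Hxu t)ᵀ * X t + Huu t * U t + Huθ t + (G t)ᵀ * Λ (t + 1) := by abel
        _ = 0 := (hstat t ht).symm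
    have h1 : Huu t * U t = -((Hxu t)ᵀ * X t + Huθ t + (G t)ᵀ * Λ (t + 1)) :=
      eq_neg_of_add_eq_zero_left h2
    have hU0 : U t = -((Huu t)⁻¹ * ((Hxu t)ᵀ * X t + Huθ t + (G t)ᵀ * Λ (t + 1))) := by
      have h3 := Matrix.nonsing_inv_mul_cancel_left (Huu t) (U t) (hHuu t ht)
      rw [h1, Matrix.mul_neg] at h3
      exact h3.symm
    -- Λ (t+1) satisfies the linear system
    have hE1 : Λ (t + 1) =
        V (t + 1) * (F t * X t + G t *
          (-((Huu t)⁻¹ * ((Hxu t)ᵀ * X t + Huθ t + (G t)ᵀ * Λ (t + 1)))) + E t) + W (t + 1) := by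
      have h := ih
      rw [hstate t ht, hU0] at h
      exact h
    have hE2 := congrArg
      (fun M => M + V (t + 1) * (G t * (Huu t)⁻¹ * (G t)ᵀ) * Λ (t + 1)) hE1
    have hSΛ : (1 + V (t + 1) * (G t * (Huu t)⁻¹ * (G t)ᵀ)) * Λ (t + 1) =
        V (t + 1) * (F t - G t * (Huu t)⁻¹ * (Hxu t)ᵀ) * X t +
          V (t + 1) * (E t - G t * (Huu t)⁻¹ * Huθ t) + W (t + 1) := by
      calc (1 + V (t + 1) * (G t * (Huu t)⁻¹ * (G t)ᵀ)) * Λ (t + 1)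
          = Λ (t + 1) + V (t + 1) * (G t * (Huu t)⁻¹ * (G t)ᵀ) * Λ (t + 1) := by
            rw [Matrix.add_mul, Matrix.one_mul]
        _ = V (t + 1) * (F t * X t + G t *
              (-((Huu t)⁻¹ * ((Hxu t)ᵀ * X t + Huθ t + (G t)ᵀ * Λ (t + 1)))) + E t) +
              W (t + 1) + V (t + 1) * (G t * (Huu t)⁻¹ * (G t)ᵀ) * Λ (t + 1) := hE2
        _ = V (t + 1) * (F t - G t * (Huu t)⁻¹ * (Hxu t)ᵀ) * X t +
              V (t + 1) * (E t - G t * (Huu t)⁻¹ * Huθ t) + W (t + 1) := by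
            simp only [Matrix.mul_add, Matrix.add_mul, Matrix.mul_sub, Matrix.sub_mul,
              Matrix.mul_neg, Matrix.neg_mul, Matrix.mul_assoc]
            abel
    have hΛZ : Λ (t + 1) =
        (1 + V (t + 1) * (G t * (Huu t)⁻¹ * (G t)ᵀ))⁻¹ *
          (V (t + 1) * (F t - G t * (Huu t)⁻¹ * (Hxu t)ᵀ) * X t +
            V (t + 1) * (E t - G t * (Huu t)⁻¹ * Huθ t) + W (t + 1)) := by
      have h4 := Matrix.nonsing_inv_mul_cancel_left
        (1 + V (t + 1) * (G t * (Huu t)⁻¹ * (G t)ᵀ)) (Λ (t + 1)) (hVB t ht)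
      rw [hSΛ] at h4
      exact h4.symm
    have hUfin : U t = -(Huu t)⁻¹ *
        ((Hxu t)ᵀ * X t + Huθ t +
          (G t)ᵀ * (1 + V (t + 1) * (G t * (Huu t)⁻¹ * (G t)ᵀ))⁻¹ *
            (V (t + 1) * (F t - G t * (Huu t)⁻¹ * (Hxu t)ᵀ) * X t +
              V (t + 1) * (E t - G t * (Huu t)⁻¹ * Huθ t) + W (t + 1))) := by
      rw [hU0, hΛZ]
      simp only [Matrix.neg_mul, Matrix.mul_assoc]
    refine ⟨hUfin, ?_⟩
    rw [hcostate t ht, hVrec t ht, hWrec t ht, hUfin, hΛZ]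
    simp only [Matrix.transpose_sub, Matrix.transpose_mul, Matrix.transpose_transpose,
      hHuuInvT, Matrix.mul_add, Matrix.add_mul, Matrix.mul_sub, Matrix.sub_mul,
      Matrix.mul_neg, Matrix.neg_mul, Matrix.mul_assoc]
    abel
  have Lall : ∀ t ≤ T, Λ t = V t * X t + W t := by
    have main : ∀ d, d ≤ T → Λ (T - d) = V (T - d) * X (T - d) + W (T - d) := by
      intro d
      induction d with
      | zero => intro _; simpa [hVT, hWT] using hterm
      | succ k ihk =>
        intro hk
        have ht : T - (k + 1) < T := by omega
        have hsucc : T - (k + 1) + 1 = T - k := by omega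
        exact (step (T - (k + 1)) ht (by rw [hsucc]; exact ihk (by omega))).2
    intro t htT
    have h := main (T - t) (by omega)
    rwa [Nat.sub_sub_self htT] at h
  exact ⟨Lall, fun t ht => (step t ht (Lall (t + 1) ht)).1⟩
end

section
/- Let X_0 ∈ ℝ^{n×p} be given, and define sequences by the forward recursion: for t = 0,…,T−1, U_t := −(H^{uu}_t)⁻¹ (H^{ux}_t X_t + H^{uθ}_t + G_tᵀ (I + V_{t+1} B_t)⁻¹ (V_{t+1} A_t X_t + V_{t+1} M_t + W_{t+1})) and X_{t+1} := F_t X_t + G_t U_t + E_t; also define Λ_t := V_t X_t + W_t for t = 0,…,T. Then these sequences satisfy the differentiated Pontryagin system: for every t ∈ {0,…,T−1}, Λ_t = H^{xx}_t X_t + H^{xu}_t U_t + H^{xθ}_t + F_tᵀ Λ_{t+1} and 0 = H^{ux}_t X_t + H^{uu}_t U_t + H^{uθ}_t + G_tᵀ Λ_{t+1}, together with the terminal condition Λ_T = H^{xx}_T X_T + H^{xθ}_T. -/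
open Matrix

set_option maxHeartbeats 2000000 in
/-- PDP forward pass: the sequences produced by the forward recursion
`U_t := −(H^{uu}_t)⁻¹ (H^{ux}_t X_t + H^{uθ}_t + G_tᵀ (I + V_{t+1} B_t)⁻¹
(V_{t+1} A_t X_t + V_{t+1} M_t + W_{t+1}))`, `X_{t+1} := F_t X_t + G_t U_t + E_t`, with
costates `Λ_t := V_t X_t + W_t`, satisfy the differentiated Pontryagin system (costate
equation, stationarity equation) and the terminal condition `Λ_T = H^{xx}_T X_T + H^{xθ}_T`. -/
theorem pdp_forward_pass
    (n m p T : ℕ) (hn : 0 < n) (hm : 0 < m) (hp : 0 < p) (hT : 1 ≤ T)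
    (F : ℕ → Matrix (Fin n) (Fin n) ℝ) (G : ℕ → Matrix (Fin n) (Fin m) ℝ)
    (E : ℕ → Matrix (Fin n) (Fin p) ℝ)
    (Hxx : ℕ → Matrix (Fin n) (Fin n) ℝ) (hHxx : ∀ t ≤ T, (Hxx t).IsSymm)
    (Hxu : ℕ → Matrix (Fin n) (Fin m) ℝ)
    (Huu : ℕ → Matrix (Fin m) (Fin m) ℝ)
    (hHuuSymm : ∀ t < T, (Huu t).IsSymm) (hHuu : ∀ t < T, IsUnit (Huu t).det)
    (Hxθ : ℕ → Matrix (Fin n) (Fin p) ℝ) (Huθ : ℕ → Matrix (Fin m) (Fin p) ℝ)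
    (V : ℕ → Matrix (Fin n) (Fin n) ℝ) (W : ℕ → Matrix (Fin n) (Fin p) ℝ)
    (hVT : V T = Hxx T) (hWT : W T = Hxθ T)
    (hVB : ∀ t < T, IsUnit (1 + V (t + 1) * (G t * (Huu t)⁻¹ * (G t)ᵀ)).det)
    (hVrec : ∀ t < T,
      V t =
        Hxx t - Hxu t * (Huu t)⁻¹ * (Hxu t)ᵀ +
          (F t - G t * (Huu t)⁻¹ * (Hxu t)ᵀ)ᵀ *
            (1 + V (t + 1) * (G t * (Huu t)⁻¹ * (G t)ᵀ))⁻¹ * V (t + 1) *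
            (F t - G t * (Huu t)⁻¹ * (Hxu t)ᵀ))
    (hWrec : ∀ t < T,
      W t =
        (F t - G t * (Huu t)⁻¹ * (Hxu t)ᵀ)ᵀ *
            (1 + V (t + 1) * (G t * (Huu t)⁻¹ * (G t)ᵀ))⁻¹ *
            (W (t + 1) + V (t + 1) * (E t - G t * (Huu t)⁻¹ * Huθ t)) +
          (Hxθ t - Hxu t * (Huu t)⁻¹ * Huθ t))
    (X : ℕ → Matrix (Fin n) (Fin p) ℝ) (U : ℕ → Matrix (Fin m) (Fin p) ℝ)
    (Λ : ℕ → Matrix (Fin n) (Fin p) ℝ)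
    (hU : ∀ t < T,
      U t = -(Huu t)⁻¹ *
        ((Hxu t)ᵀ * X t + Huθ t +
          (G t)ᵀ * (1 + V (t + 1) * (G t * (Huu t)⁻¹ * (G t)ᵀ))⁻¹ *
            (V (t + 1) * (F t - G t * (Huu t)⁻¹ * (Hxu t)ᵀ) * X t +
              V (t + 1) * (E t - G t * (Huu t)⁻¹ * Huθ t) + W (t + 1))))
    (hstate : ∀ t < T, X (t + 1) = F t * X t + G t * U t + E t)
    (hΛ : ∀ t ≤ T, Λ t = V t * X t + W t) :
    (∀ t < T, Λ t = Hxx t * X t + Hxu t * U t + Hxθ t + (F t)ᵀ * Λ (t + 1)) ∧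
      (∀ t < T, 0 = (Hxu t)ᵀ * X t + Huu t * U t + Huθ t + (G t)ᵀ * Λ (t + 1)) ∧
      Λ T = Hxx T * X T + Hxθ T := by
  have hKs : ∀ t < T,
      Λ (t + 1) =
        (1 + V (t + 1) * (G t * (Huu t)⁻¹ * (G t)ᵀ))⁻¹ *
          (V (t + 1) * (F t - G t * (Huu t)⁻¹ * (Hxu t)ᵀ) * X t +
            V (t + 1) * (E t - G t * (Huu t)⁻¹ * Huθ t) + W (t + 1)) := by
    intro t ht
    obtain ⟨K, hKdef⟩ : ∃ K, K = (1 + V (t + 1) * (G t * (Huu t)⁻¹ * (G t)ᵀ))⁻¹ :=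
      ⟨_, rfl⟩
    have hK : (1 + V (t + 1) * (G t * (Huu t)⁻¹ * (G t)ᵀ)) * K = 1 := by
      rw [hKdef]; exact Matrix.mul_nonsing_inv _ (hVB t ht)
    rw [hΛ (t + 1) ht, hstate t ht, hU t ht, ← hKdef]
    have key : V (t + 1) * (G t * (Huu t)⁻¹ * (G t)ᵀ) *
        (K * (V (t + 1) * (F t - G t * (Huu t)⁻¹ * (Hxu t)ᵀ) * X t +
          V (t + 1) * (E t - G t * (Huu t)⁻¹ * Huθ t) + W (t + 1))) =
        (V (t + 1) * (F t - G t * (Huu t)⁻¹ * (Hxu t)ᵀ) * X t +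
          V (t + 1) * (E t - G t * (Huu t)⁻¹ * Huθ t) + W (t + 1)) -
        K * (V (t + 1) * (F t - G t * (Huu t)⁻¹ * (Hxu t)ᵀ) * X t +
          V (t + 1) * (E t - G t * (Huu t)⁻¹ * Huθ t) + W (t + 1)) := by
      refine eq_sub_of_add_eq' ?_
      calc K * (V (t + 1) * (F t - G t * (Huu t)⁻¹ * (Hxu t)ᵀ) * X t +
            V (t + 1) * (E t - G t * (Huu t)⁻¹ * Huθ t) + W (t + 1)) +
          V (t + 1) * (G t * (Huu t)⁻¹ * (G t)ᵀ) *
            (K * (V (t + 1) * (F t - G t * (Huu t)⁻¹ * (Hxu t)ᵀ) * X t +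
              V (t + 1) * (E t - G t * (Huu t)⁻¹ * Huθ t) + W (t + 1)))
          = (1 + V (t + 1) * (G t * (Huu t)⁻¹ * (G t)ᵀ)) * K *
            (V (t + 1) * (F t - G t * (Huu t)⁻¹ * (Hxu t)ᵀ) * X t +
              V (t + 1) * (E t - G t * (Huu t)⁻¹ * Huθ t) + W (t + 1)) := by
            simp only [Matrix.mul_add, Matrix.add_mul, Matrix.mul_sub, Matrix.sub_mul,
              Matrix.mul_neg, Matrix.neg_mul, Matrix.mul_assoc, Matrix.one_mul,
              Matrix.mul_one, sub_eq_add_neg, neg_add, neg_neg] <;> abel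
        _ = _ := by rw [hK, Matrix.one_mul]
    calc _ = (V (t + 1) * (F t - G t * (Huu t)⁻¹ * (Hxu t)ᵀ) * X t +
            V (t + 1) * (E t - G t * (Huu t)⁻¹ * Huθ t) + W (t + 1)) -
          V (t + 1) * (G t * (Huu t)⁻¹ * (G t)ᵀ) *
            (K * (V (t + 1) * (F t - G t * (Huu t)⁻¹ * (Hxu t)ᵀ) * X t +
              V (t + 1) * (E t - G t * (Huu t)⁻¹ * Huθ t) + W (t + 1))) := by
          simp only [Matrix.mul_add, Matrix.add_mul, Matrix.mul_sub, Matrix.sub_mul,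
            Matrix.mul_neg, Matrix.neg_mul, Matrix.mul_assoc, Matrix.one_mul,
            Matrix.mul_one, sub_eq_add_neg, neg_add, neg_neg] <;> abel
      _ = _ := by rw [key]; abel
  refine ⟨?_, ?_, ?_⟩
  · intro t ht
    have hsym : ((Huu t)⁻¹)ᵀ = (Huu t)⁻¹ := by
      rw [Matrix.transpose_nonsing_inv, (hHuuSymm t ht).eq]
    rw [hΛ t ht.le, hVrec t ht, hWrec t ht, hU t ht, hKs t ht]
    simp only [Matrix.transpose_sub, Matrix.transpose_add, Matrix.transpose_mul,
      Matrix.transpose_transpose, Matrix.transpose_smul, Matrix.transpose_neg, hsym,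
      Matrix.mul_add, Matrix.add_mul, Matrix.mul_sub,
      Matrix.sub_mul, Matrix.mul_neg, Matrix.neg_mul, smul_mul_assoc, mul_smul_comm,
      Matrix.mul_assoc, Matrix.one_mul,
      Matrix.mul_one, sub_eq_add_neg, neg_add, neg_neg] <;> abel
  · intro t ht
    have hH : Huu t * (Huu t)⁻¹ = 1 := Matrix.mul_nonsing_inv _ (hHuu t ht)
    have h2 : Huu t * U t =
        -((Hxu t)ᵀ * X t + Huθ t +
          (G t)ᵀ * (1 + V (t + 1) * (G t * (Huu t)⁻¹ * (G t)ᵀ))⁻¹ *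
            (V (t + 1) * (F t - G t * (Huu t)⁻¹ * (Hxu t)ᵀ) * X t +
              V (t + 1) * (E t - G t * (Huu t)⁻¹ * Huθ t) + W (t + 1))) := by
      rw [hU t ht, Matrix.neg_mul, Matrix.mul_neg, ← Matrix.mul_assoc, hH, Matrix.one_mul]
    rw [h2, hKs t ht]
    simp only [Matrix.mul_add, Matrix.add_mul, Matrix.mul_sub, Matrix.sub_mul,
      Matrix.mul_neg, Matrix.neg_mul, Matrix.mul_assoc, Matrix.one_mul,
      Matrix.mul_one, sub_eq_add_neg, neg_add, neg_neg] <;> abel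
  · rw [hΛ T le_rfl, hVT, hWT]
end
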